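/- For all natural numbers n, m and every real number x: B_{s,q}[n+m; x] = Σ_{r=0}^{n} Σ_{j=0}^{m} Σ_{k=0}^{n+m} S_{s,q}[m,j] · q^{(j(1−s)+sm)(k−j)} · binom(r, k−j)_{q^{s−1}} · S_{s,q}[n,r] · x^k · Π_{i=0}^{r−k+j−1} [j(1−s) + sm + i·(s−1)]_q, where binom(r, k−j) is interpreted as 0 when j > k and the exponent k − j is computed in ℤ. -/

import Mathlib

/-- The `q`-bracket `[t]_q = (q^t - 1)/(q - 1)` (real exponentiation). -/
noncomputable def qBracket (q t : ℝ) : ℝ := (q ^ t - 1) / (q - 1)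

open Classical in
/-- The `Q`-binomial coefficient: the sum of `Q^(t₁+⋯+t_{n-k})` over all weakly
increasing integer tuples `0 ≤ t₁ ≤ ⋯ ≤ t_{n-k} ≤ k` when `k ≤ n`, and `0` when `k > n`. -/
noncomputable def qBinom (Q : ℝ) (n k : ℕ) : ℝ :=
  if k ≤ n then
    ∑ f ∈ Finset.univ.filter (fun f : Fin (n - k) → Fin (k + 1) => Monotone f),
      Q ^ (∑ i, (f i : ℕ))
  else 0

/-- The generalized `q`-Stirling numbers `S_{s,q}[n,k]` of Goldman–Haglund type. -/
noncomputable def genStirling (s q : ℝ) : ℕ → ℕ → ℝ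
  | 0, 0 => 1
  | 0, _ + 1 => 0
  | _ + 1, 0 => 0
  | n + 1, k + 1 =>
    if k + 1 ≤ n + 1 then
      q ^ (s * (n : ℝ) - (s - 1) * (k : ℝ)) * genStirling s q n k
        + qBracket q (s * (n : ℝ) - (s - 1) * ((k : ℝ) + 1)) * genStirling s q n (k + 1)
    else 0

/-- The generalized Bell polynomial `B_{s,q}[n;x]`. -/
noncomputable def genBellPoly (s q : ℝ) (n : ℕ) (x : ℝ) : ℝ :=
  ∑ k ∈ Finset.range (n + 1), genStirling s q n k * x ^ k

/-! Write `B_N` for `x ↦ B_{s,q}[N;x]` and `T_a f x = q^a (x + 1/(q-1)) f(q^{1-s} x) - f(x)/(q-1)`.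
The Stirling recurrence says `B_{N+1} = T_{sN} B_N`. Since `T_{a+b} = q^a T_b + [a]_q`, the same
recurrence gives the operator identity
`T_{c+s(n-1)} ⋯ T_c = ∑_r S[n,r] T_{c+(s-1)(r-1)} ⋯ T_c` for every `c`; take `c = sm` and apply it
to `B_m = ∑_j S[m,j] x^j`. Moving `x^j` through the operators shifts `c` to `C = j(1-s) + sm`, and
`T_{C+(s-1)(r-1)} ⋯ T_C 1 = ∑_l q^{Cl} binom(r,l)_{q^{s-1}} ∏_{i<r-l} [C+i(s-1)]_q x^l`
by the `q`-Pascal rule. -/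

open Finset

open Classical in
noncomputable def monotoneTupleSum (Q : ℝ) (a b : ℕ) : ℝ :=
  ∑ f ∈ univ.filter (fun f : Fin a → Fin (b + 1) => Monotone f), Q ^ (∑ i, (f i : ℕ))

lemma monotone_cons_zero {a b : ℕ} {g : Fin a → Fin (b + 1)} (hg : Monotone g) :
    Monotone (Fin.cons 0 g : Fin (a + 1) → Fin (b + 1)) := by
  intro i j hij
  cases i using Fin.cases with
  | zero => exact Fin.zero_le _
  | succ i =>
    cases j using Fin.cases with
    | zero => exact absurd hij (by simp)
    | succ j => exact hg (Fin.succ_le_succ_iff.1 hij)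

lemma monotoneTupleSum_succ_succ (Q : ℝ) (a b : ℕ) :
    monotoneTupleSum Q (a + 1) (b + 1)
      = monotoneTupleSum Q a (b + 1) + Q ^ (a + 1) * monotoneTupleSum Q (a + 1) b := by
  classical
  -- tuples starting at `0` lose their head; the others are lowered by one, taking `a + 1` off the
  -- exponent
  rw [monotoneTupleSum, ← sum_filter_add_sum_filter_not _ (fun f => f 0 = 0)]
  congr 1
  · refine (sum_nbij' (fun g => Fin.cons 0 g) Fin.tail ?_ ?_ ?_ ?_ ?_).symm
    · intro g hg
      simp only [mem_filter, mem_univ, true_and] at hg ⊢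
      exact ⟨monotone_cons_zero hg, rfl⟩
    · intro f hf
      simp only [mem_filter, mem_univ, true_and] at hf ⊢
      exact hf.1.comp (Fin.strictMono_succ).monotone
    · intro g _
      exact Fin.tail_cons _ _
    · intro f hf
      simp only [mem_filter, mem_univ, true_and] at hf
      rw [← hf.2]
      exact Fin.cons_self_tail f
    · intro g _
      simp [Fin.sum_univ_succ]
  · rw [monotoneTupleSum, mul_sum]
    refine (sum_nbij' (fun g i => (g i).succ) (fun f i => Fin.predAbove 0 (f i))
      ?_ ?_ ?_ ?_ ?_).symm
    · intro g hg
      simp only [mem_filter, mem_univ, true_and] at hg ⊢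
      exact ⟨fun i j hij => Fin.succ_le_succ_iff.2 (hg hij), Fin.succ_ne_zero _⟩
    · intro f hf
      simp only [mem_filter, mem_univ, true_and] at hf ⊢
      exact fun i j hij => Fin.predAbove_right_monotone 0 (hf.1 hij)
    · intro g _
      funext i
      exact Fin.predAbove_zero_succ
    · intro f hf
      simp only [mem_filter, mem_univ, true_and] at hf
      funext i
      exact Fin.succ_predAbove_zero fun h =>
        hf.2 (le_antisymm (h ▸ hf.1 (Fin.zero_le i)) (Fin.zero_le _))
    · intro g _
      simp [Fin.val_succ, sum_add_distrib, pow_add, mul_comm]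

lemma qBinom_of_le (Q : ℝ) {n k : ℕ} (h : k ≤ n) :
    qBinom Q n k = monotoneTupleSum Q (n - k) k := by
  rw [qBinom, if_pos h, monotoneTupleSum]

lemma qBinom_of_lt (Q : ℝ) {n k : ℕ} (h : n < k) : qBinom Q n k = 0 := by
  rw [qBinom, if_neg h.not_ge]

lemma qBinom_zero_right (Q : ℝ) (n : ℕ) : qBinom Q n 0 = 1 := by
  rw [qBinom_of_le Q n.zero_le, monotoneTupleSum,
    filter_true_of_mem fun f _ => @Subsingleton.monotone' _ (Fin 1) _ _ _ f]
  simp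

lemma qBinom_self (Q : ℝ) (n : ℕ) : qBinom Q n n = 1 := by
  rw [qBinom_of_le Q le_rfl, Nat.sub_self, monotoneTupleSum,
    filter_true_of_mem fun f _ => Subsingleton.monotone f]
  simp

lemma qBinom_succ_succ (Q : ℝ) {r k : ℕ} (h : k ≤ r) :
    qBinom Q (r + 1) (k + 1) = qBinom Q r (k + 1) + Q ^ (r - k) * qBinom Q r k := by
  rcases h.eq_or_lt with rfl | h
  · rw [qBinom_self, qBinom_of_lt Q (Nat.lt_succ_self k), qBinom_self]; simp
  obtain ⟨a, rfl⟩ := Nat.exists_eq_add_of_lt h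
  rw [qBinom_of_le Q (by omega : k + 1 ≤ k + a + 1 + 1),
    qBinom_of_le Q (by omega : k + 1 ≤ k + a + 1), qBinom_of_le Q (by omega : k ≤ k + a + 1),
    show k + a + 1 + 1 - (k + 1) = a + 1 by omega, show k + a + 1 - (k + 1) = a by omega,
    show k + a + 1 - k = a + 1 by omega,
    monotoneTupleSum_succ_succ]

theorem sum_range_succ_smul_of_rec {R M : Type*} [CommSemiring R] [AddCommMonoid M]
    [Module R M] (n : ℕ) (u v A B : ℕ → R) (g : ℕ → M) (hv₀ : v 0 = B 0 * u 0)
    (hv : ∀ k ≤ n, v (k + 1) = A k * u k + B (k + 1) * u (k + 1)) (hu : u (n + 1) = 0) :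
    ∑ k ∈ range (n + 2), v k • g k
      = ∑ k ∈ range (n + 1), u k • (A k • g (k + 1) + B k • g k) := by
  have hB : ∑ k ∈ range (n + 2), (B k * u k) • g k
      = ∑ k ∈ range (n + 1), (B k * u k) • g k := by
    rw [sum_range_succ, hu, mul_zero, zero_smul, add_zero]
  calc ∑ k ∈ range (n + 2), v k • g k
      = ∑ k ∈ range (n + 1), ((A k * u k) • g (k + 1) + (B (k + 1) * u (k + 1)) • g (k + 1))
          + (B 0 * u 0) • g 0 := by
        rw [sum_range_succ', hv₀]
        refine congrArg (· + _) (sum_congr rfl fun k hk => ?_)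
        rw [hv k (Nat.lt_succ_iff.1 (mem_range.1 hk)), add_smul]
    _ = ∑ k ∈ range (n + 1), (A k * u k) • g (k + 1)
          + ∑ k ∈ range (n + 1), (B k * u k) • g k := by
        rw [sum_add_distrib, add_assoc, ← hB, sum_range_succ' (fun k => (B k * u k) • g k)]
    _ = ∑ k ∈ range (n + 1), u k • (A k • g (k + 1) + B k • g k) := by
        rw [← sum_add_distrib]
        refine sum_congr rfl fun k _ => ?_
        rw [smul_add, smul_smul, smul_smul, mul_comm (A k), mul_comm (B k)]

noncomputable def bellOp (q s a : ℝ) : (ℝ → ℝ) →ₗ[ℝ] (ℝ → ℝ) where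
  toFun f x := q ^ a * (x + (q - 1)⁻¹) * f (q ^ (1 - s) * x) - (q - 1)⁻¹ * f x
  map_add' f g := by ext x; simp only [Pi.add_apply]; ring
  map_smul' c f := by ext x; simp only [Pi.smul_apply, smul_eq_mul, RingHom.id_apply]; ring

noncomputable def bellOpProd (q s c d : ℝ) : ℕ → (ℝ → ℝ) →ₗ[ℝ] (ℝ → ℝ)
  | 0 => LinearMap.id
  | r + 1 => bellOp q s (c + d * r) ∘ₗ bellOpProd q s c d r

noncomputable def spiveyCoeff (q s C : ℝ) (r l : ℕ) : ℝ :=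
  q ^ (C * l) * qBinom (q ^ (s - 1)) r l * ∏ i ∈ range (r - l), qBracket q (C + i * (s - 1))

section

variable {q s : ℝ}

lemma bellOp_apply (a : ℝ) (f : ℝ → ℝ) (x : ℝ) :
    bellOp q s a f x = q ^ a * (x + (q - 1)⁻¹) * f (q ^ (1 - s) * x) - (q - 1)⁻¹ * f x :=
  rfl

lemma bellOp_add (hq : 0 < q) (a b : ℝ) (f : ℝ → ℝ) :
    bellOp q s (a + b) f = q ^ a • bellOp q s b f + qBracket q a • f := by
  ext x
  simp only [bellOp_apply, Pi.add_apply, Pi.smul_apply, smul_eq_mul, qBracket, Real.rpow_add hq]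
  ring

lemma bellOp_mul_pow (hq : 0 < q) (a : ℝ) (j : ℕ) (f : ℝ → ℝ) :
    bellOp q s a (fun x => x ^ j * f x) = fun x => x ^ j * bellOp q s (a + (1 - s) * j) f x := by
  ext x
  simp only [bellOp_apply, mul_pow, Real.rpow_add hq, Real.rpow_mul_natCast hq.le]
  ring

lemma bellOp_sum_pow (hq : 0 < q) (a : ℝ) (N : ℕ) (u : ℕ → ℝ) (x : ℝ) :
    bellOp q s a (fun x => ∑ k ∈ range N, u k * x ^ k) x
      = ∑ k ∈ range N,
          u k * (q ^ (a + (1 - s) * k) * x ^ (k + 1) + qBracket q (a + (1 - s) * k) * x ^ k) := by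
  rw [bellOp_apply, mul_sum, mul_sum, ← sum_sub_distrib]
  refine sum_congr rfl fun k _ => ?_
  rw [mul_pow, ← Real.rpow_mul_natCast hq.le, qBracket, Real.rpow_add hq]
  ring

lemma bellOpProd_succ (c d : ℝ) (r : ℕ) :
    bellOpProd q s c d (r + 1) = bellOp q s (c + d * r) ∘ₗ bellOpProd q s c d r :=
  rfl

theorem bellOpProd_mul_pow (hq : 0 < q) (c d : ℝ) (j r : ℕ) (f : ℝ → ℝ) :
    bellOpProd q s c d r (fun x => x ^ j * f x)
      = fun x => x ^ j * bellOpProd q s (c + (1 - s) * j) d r f x := by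
  induction r with
  | zero => rfl
  | succ r ih =>
    rw [bellOpProd_succ, LinearMap.comp_apply, ih, bellOp_mul_pow hq, bellOpProd_succ,
      add_right_comm]
    rfl

lemma genStirling_of_lt {n k : ℕ} (h : n < k) : genStirling s q n k = 0 := by
  match n, k, h with
  | 0, k + 1, _ => rfl
  | n + 1, k + 1, h => rw [genStirling, if_neg (by omega)]

lemma genStirling_succ_zero (n : ℕ) :
    genStirling s q (n + 1) 0 = qBracket q (s * n) * genStirling s q n 0 := by
  cases n with
  | zero => simp [genStirling, qBracket]
  | succ n => simp [genStirling]

lemma genStirling_succ_succ (n k : ℕ) :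
    genStirling s q (n + 1) (k + 1)
      = q ^ (s * n + (1 - s) * k) * genStirling s q n k
        + qBracket q (s * n + (1 - s) * (k + 1 : ℕ)) * genStirling s q n (k + 1) := by
  rcases le_or_gt k n with h | h
  · rw [genStirling, if_pos (by omega)]
    push_cast
    ring_nf
  · rw [genStirling_of_lt (by omega), genStirling_of_lt h, genStirling_of_lt (by omega)]
    ring

theorem sum_genStirling_succ_smul {M : Type*} [AddCommMonoid M] [Module ℝ M] (n : ℕ)
    (g : ℕ → M) :
    ∑ k ∈ range (n + 2), genStirling s q (n + 1) k • g k
      = ∑ k ∈ range (n + 1), genStirling s q n k •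
          (q ^ (s * n + (1 - s) * k) • g (k + 1) + qBracket q (s * n + (1 - s) * k) • g k) :=
  sum_range_succ_smul_of_rec n _ _ _ (fun k => qBracket q (s * n + (1 - s) * k)) g
    (by simpa using genStirling_succ_zero n) (fun k _ => genStirling_succ_succ n k)
    (genStirling_of_lt n.lt_succ_self)

theorem genBellPoly_succ (hq : 0 < q) (N : ℕ) :
    genBellPoly s q (N + 1) = bellOp q s (s * N) (genBellPoly s q N) := by
  ext x
  have h := sum_genStirling_succ_smul (s := s) (q := q) N (fun k => x ^ k)
  simp only [smul_eq_mul] at h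
  rw [genBellPoly, h]
  exact (bellOp_sum_pow hq _ _ _ x).symm

theorem genBellPoly_add (hq : 0 < q) (n m : ℕ) :
    genBellPoly s q (n + m) = bellOpProd q s (s * m) s n (genBellPoly s q m) := by
  induction n with
  | zero => simp [bellOpProd]
  | succ n ih =>
    rw [Nat.add_right_comm, genBellPoly_succ hq, ih, bellOpProd_succ, LinearMap.comp_apply]
    congr 2
    push_cast
    ring

theorem bellOpProd_eq_sum_genStirling (hq : 0 < q) (c : ℝ) (n : ℕ) (f : ℝ → ℝ) :
    bellOpProd q s c s n f
      = ∑ r ∈ range (n + 1), genStirling s q n r • bellOpProd q s c (s - 1) r f := by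
  induction n with
  | zero => simp [bellOpProd, genStirling]
  | succ n ih =>
    rw [sum_genStirling_succ_smul, bellOpProd_succ, LinearMap.comp_apply, ih, map_sum]
    refine sum_congr rfl fun r _ => ?_
    -- `c + s n = (s n + (1 - s) r) + (c + (s - 1) r)`: `bellOp_add` is the Stirling recurrence
    rw [map_smul, bellOpProd_succ, LinearMap.comp_apply, ← bellOp_add hq]
    congr 3
    ring

lemma spiveyCoeff_of_lt (C : ℝ) {r l : ℕ} (h : r < l) : spiveyCoeff q s C r l = 0 := by
  rw [spiveyCoeff, qBinom_of_lt _ h, mul_zero, zero_mul]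

lemma spiveyCoeff_succ_zero (C : ℝ) (r : ℕ) :
    spiveyCoeff q s C (r + 1) 0 = qBracket q (C + (s - 1) * r) * spiveyCoeff q s C r 0 := by
  simp only [spiveyCoeff, qBinom_zero_right, Nat.sub_zero, prod_range_succ,
    mul_comm (s - 1) (r : ℝ)]
  ring

lemma spiveyCoeff_succ_succ (hq : 0 < q) (C : ℝ) {r l : ℕ} (h : l ≤ r) :
    spiveyCoeff q s C (r + 1) (l + 1)
      = q ^ (C + (s - 1) * r + (1 - s) * l) * spiveyCoeff q s C r l
        + qBracket q (C + (s - 1) * r + (1 - s) * (l + 1 : ℕ)) * spiveyCoeff q s C r (l + 1) := by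
  obtain ⟨t, rfl⟩ := Nat.exists_eq_add_of_le h
  have hexp : q ^ (C * (l + 1 : ℕ)) * (q ^ (s - 1)) ^ t
      = q ^ (C + (s - 1) * (l + t : ℕ) + (1 - s) * l) * q ^ (C * l) := by
    rw [← Real.rpow_mul_natCast hq.le, ← Real.rpow_add hq, ← Real.rpow_add hq]
    congr 1
    push_cast
    ring
  simp only [spiveyCoeff, qBinom_succ_succ _ h, Nat.add_sub_add_right, Nat.add_sub_cancel_left]
  cases t with
  | zero =>
    rw [qBinom_of_lt _ (by omega)]
    linear_combination
      (qBinom (q ^ (s - 1)) (l + 0) l * ∏ i ∈ range 0, qBracket q (C + i * (s - 1))) * hexp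
  | succ t =>
    rw [show l + (t + 1) - (l + 1) = t by omega,
      show C + (s - 1) * ((l + (t + 1) : ℕ) : ℝ) + (1 - s) * ((l + 1 : ℕ) : ℝ) = C + t * (s - 1) by
        push_cast; ring, prod_range_succ]
    linear_combination (qBinom (q ^ (s - 1)) (l + (t + 1)) l
      * (∏ i ∈ range t, qBracket q (C + i * (s - 1))) * qBracket q (C + t * (s - 1))) * hexp

theorem bellOpProd_one (hq : 0 < q) (C : ℝ) (r : ℕ) :
    bellOpProd q s C (s - 1) r 1 = fun x => ∑ l ∈ range (r + 1), spiveyCoeff q s C r l * x ^ l := by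
  induction r with
  | zero => ext x; simp [bellOpProd, spiveyCoeff, qBinom_self]
  | succ r ih =>
    ext x
    have h := sum_range_succ_smul_of_rec r (spiveyCoeff q s C r) (spiveyCoeff q s C (r + 1))
      (fun l => q ^ (C + (s - 1) * r + (1 - s) * l))
      (fun l => qBracket q (C + (s - 1) * r + (1 - s) * l)) (fun l => x ^ l)
      (by simpa using spiveyCoeff_succ_zero C r) (fun l hl => spiveyCoeff_succ_succ hq C hl)
      (spiveyCoeff_of_lt C r.lt_succ_self)
    simp only [smul_eq_mul] at h
    rw [bellOpProd_succ, LinearMap.comp_apply, ih, bellOp_sum_pow hq, h]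

theorem genBellPoly_add_eq_sum (hq : 0 < q) (n m : ℕ) (x : ℝ) :
    genBellPoly s q (n + m) x
      = ∑ r ∈ range (n + 1), ∑ j ∈ range (m + 1), genStirling s q n r * genStirling s q m j *
          (x ^ j * ∑ l ∈ range (r + 1), spiveyCoeff q s (j * (1 - s) + s * m) r l * x ^ l) := by
  have hBm : genBellPoly s q m
      = ∑ j ∈ range (m + 1), genStirling s q m j • fun x => x ^ j * (1 : ℝ → ℝ) x := by
    ext x
    simp [genBellPoly]
  rw [genBellPoly_add hq, bellOpProd_eq_sum_genStirling hq, hBm]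
  simp only [map_sum, map_smul, bellOpProd_mul_pow hq, bellOpProd_one hq, Finset.sum_apply,
    Pi.smul_apply, smul_eq_mul, mul_sum]
  refine sum_congr rfl fun r _ => sum_congr rfl fun j _ => sum_congr rfl fun l _ => ?_
  rw [show s * m + (1 - s) * j = j * (1 - s) + s * m by ring]
  ring

lemma pow_mul_sum_spiveyCoeff (C : ℝ) {r j N : ℕ} (h : r + j < N) (x : ℝ) :
    x ^ j * ∑ l ∈ range (r + 1), spiveyCoeff q s C r l * x ^ l
      = ∑ k ∈ range N,
          q ^ (C * ((k : ℝ) - j)) * (if j ≤ k then qBinom (q ^ (s - 1)) r (k - j) else 0)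
            * x ^ k * ∏ i ∈ range (r + j - k), qBracket q (C + i * (s - 1)) := by
  obtain ⟨N, rfl⟩ : ∃ N', N = j + N' := ⟨N - j, by omega⟩
  rw [sum_range_add _ j N, sum_eq_zero (s := range j) fun k hk => by
    rw [if_neg (by simpa using hk)]; ring, zero_add, mul_sum]
  refine (sum_subset (range_subset_range.2 (by omega)) fun l _ hl => ?_).trans
    (sum_congr rfl fun l _ => ?_)
  · rw [spiveyCoeff_of_lt C (by simpa using hl), zero_mul, mul_zero]
  · rw [if_pos (Nat.le_add_right j l), Nat.add_sub_cancel_left, add_comm r j, Nat.add_sub_add_left,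
      Nat.cast_add, add_sub_cancel_left, spiveyCoeff, pow_add]
    ring

end

theorem spivey_bell_poly_second_general (q s : ℝ) (hq : 0 < q) (n m : ℕ) (x : ℝ) :
    genBellPoly s q (n + m) x
    = ∑ r ∈ Finset.range (n + 1), ∑ j ∈ Finset.range (m + 1),
        ∑ k ∈ Finset.range (n + m + 1),
        genStirling s q m j *
          q ^ (((j : ℝ) * (1 - s) + s * (m : ℝ)) * ((k : ℝ) - (j : ℝ))) *
          (if j ≤ k then qBinom (q ^ (s - 1)) r (k - j) else 0) *
          genStirling s q n r * x ^ k *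
          ∏ i ∈ Finset.range (r + j - k),
            qBracket q ((j : ℝ) * (1 - s) + s * (m : ℝ) + (i : ℝ) * (s - 1)) := by
  rw [genBellPoly_add_eq_sum hq]
  refine sum_congr rfl fun r hr => sum_congr rfl fun j hj => ?_
  rw [pow_mul_sum_spiveyCoeff _ (N := n + m + 1) (by simp at hr hj; omega), mul_sum]
  exact sum_congr rfl fun k _ => by ring

/-- Generalized Spivey formula for Bell polynomials, second form. -/
theorem spivey_bell_poly_second (q s : ℝ) (hq : 0 < q) (hq1 : q ≠ 1) (n m : ℕ) (x : ℝ) :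
    genBellPoly s q (n + m) x
    = ∑ r ∈ Finset.range (n + 1), ∑ j ∈ Finset.range (m + 1),
        ∑ k ∈ Finset.range (n + m + 1),
        genStirling s q m j *
          q ^ (((j : ℝ) * (1 - s) + s * (m : ℝ)) * ((k : ℝ) - (j : ℝ))) *
          (if j ≤ k then qBinom (q ^ (s - 1)) r (k - j) else 0) *
          genStirling s q n r * x ^ k *
          ∏ i ∈ Finset.range (r + j - k),
            qBracket q ((j : ℝ) * (1 - s) + s * (m : ℝ) + (i : ℝ) * (s - 1)) :=
  spivey_bell_poly_second_general q s hq n m x
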